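/- Let G be a strongly connected directed graph with all distances between distinct vertices at most 2, and let V1, V2 ⊆ V(G) be disjoint nonempty vertex sets such that (x,y) ∈ E(G) for every x ∈ V1, y ∈ V2, while (y,x) ∉ E(G) for every y ∈ V2, x ∈ V1. Let R1 ⊆ V1 resolve V1 in G and R2 ⊆ V2 resolve V2 in G, both nonempty. If V1 has no 1-vertex w.r.t. R1 or V2 has no 2-vertex w.r.t. R2, then R1 ∪ R2 resolves V1 ∪ V2 in G. -/

import Mathlib

/-!
A pair `x ∈ V₁`, `y ∈ V₂` is resolved by any `w` with an edge to `y` and none to `x`, since then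
`d(w, y) = 1 ≠ d(w, x)`. If `V₁` has no 1-vertex, either `x ∈ R₁` or some `w ∈ R₁` misses `x`,
and `w` hits `y` because all edges from `V₁` to `V₂` are present. If `V₂` has no 2-vertex,
either `y ∈ R₂` or some `w ∈ R₂` hits `y`, and `w` misses `x` because no edge goes back from
`V₂` to `V₁`. Pairs inside `V₁` or inside `V₂` are resolved by `R₁` or `R₂`.
-/

universe u

/-- There is a directed walk of length `n` from `u` to `v` in the digraph
with edge relation `E`. -/
def HasWalkLen {V : Type u} (E : V → V → Prop) (u v : V) (n : ℕ) : Prop :=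
  ∃ f : Fin (n + 1) → V, f 0 = u ∧ f (Fin.last n) = v ∧
    ∀ i : Fin n, E (f i.castSucc) (f i.succ)

/-- `v` is reachable from `u` by a directed walk. -/
def Reaches {V : Type u} (E : V → V → Prop) (u v : V) : Prop :=
  ∃ n, HasWalkLen E u v n

/-- Directed distance from `u` to `v` (length of a shortest directed path);
a junk value (`sInf ∅ = 0`) if `v` is unreachable from `u`. -/
noncomputable def ddist {V : Type u} (E : V → V → Prop) (u v : V) : ℕ :=
  sInf {n | HasWalkLen E u v n}

/-- `w` resolves the vertices `u` and `v`: `w = u`, or `w = v`, or both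
distances from `w` are defined (reachable) and different. -/
def Resolves {V : Type u} (E : V → V → Prop) (w u v : V) : Prop :=
  w = u ∨ w = v ∨
    (Reaches E w u ∧ Reaches E w v ∧ ddist E w u ≠ ddist E w v)

/-- `R` resolves the vertex set `U`: every pair of distinct vertices of `U`
is resolved by some member of `R`. -/
def ResolvesSet {V : Type u} (E : V → V → Prop) (R U : Set V) : Prop :=
  ∀ u ∈ U, ∀ v ∈ U, u ≠ v → ∃ w ∈ R, Resolves E w u v

/-- The digraph is strongly connected on the vertex set `S`. -/
def SConn {V : Type u} (E : V → V → Prop) (S : Set V) : Prop :=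
  ∀ u ∈ S, ∀ v ∈ S, Reaches E u v

/-- `u` is a 1-vertex w.r.t. `R`: `u ∉ R` and every `w ∈ R` has an edge to `u`. -/
def OneVertex {V : Type u} (E : V → V → Prop) (R : Set V) (u : V) : Prop :=
  u ∉ R ∧ ∀ w ∈ R, E w u

/-- `u` is a 2-vertex w.r.t. `R`: `u ∉ R` and no `w ∈ R` has an edge to `u`. -/
def TwoVertex {V : Type u} (E : V → V → Prop) (R : Set V) (u : V) : Prop :=
  u ∉ R ∧ ∀ w ∈ R, ¬ E w u

/-- Directed co-graphs with vertex set `S` and edge relation `E`, built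
inductively from single vertices by disjoint union, join and directed join. -/
inductive IsDicograph {V : Type u} : Set V → (V → V → Prop) → Prop
  | single (v : V) : IsDicograph {v} fun _ _ => False
  | disjUnion {S₁ S₂ : Set V} {E₁ E₂ : V → V → Prop} :
      IsDicograph S₁ E₁ → IsDicograph S₂ E₂ → Disjoint S₁ S₂ →
      IsDicograph (S₁ ∪ S₂) fun u v => E₁ u v ∨ E₂ u v
  | join {S₁ S₂ : Set V} {E₁ E₂ : V → V → Prop} :
      IsDicograph S₁ E₁ → IsDicograph S₂ E₂ → Disjoint S₁ S₂ →
      IsDicograph (S₁ ∪ S₂) fun u v =>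
        E₁ u v ∨ E₂ u v ∨ (u ∈ S₁ ∧ v ∈ S₂) ∨ (u ∈ S₂ ∧ v ∈ S₁)
  | dirJoin {S₁ S₂ : Set V} {E₁ E₂ : V → V → Prop} :
      IsDicograph S₁ E₁ → IsDicograph S₂ E₂ → Disjoint S₁ S₂ →
      IsDicograph (S₁ ∪ S₂) fun u v => E₁ u v ∨ E₂ u v ∨ (u ∈ S₁ ∧ v ∈ S₂)

section

variable {V : Type u} {E : V → V → Prop} {u v w : V}

lemma hasWalkLen_zero_iff : HasWalkLen E u v 0 ↔ u = v := by
  constructor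
  · rintro ⟨f, h0, hl, -⟩
    exact h0.symm.trans hl
  · rintro rfl
    exact ⟨fun _ => u, rfl, rfl, fun i => i.elim0⟩

lemma hasWalkLen_one_iff : HasWalkLen E u v 1 ↔ E u v := by
  constructor
  · rintro ⟨f, h0, hl, hstep⟩
    have hlast : f 1 = v := hl
    simpa [h0, hlast] using hstep 0
  · intro h
    refine ⟨![u, v], rfl, rfl, fun i => ?_⟩
    fin_cases i
    simpa using h

lemma Reaches.hasWalkLen_ddist (h : Reaches E u v) : HasWalkLen E u v (ddist E u v) :=
  Nat.sInf_mem h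

lemma ddist_eq_one_of_adj (hne : u ≠ v) (h : E u v) : ddist E u v = 1 := by
  have hwalk : HasWalkLen E u v 1 := hasWalkLen_one_iff.mpr h
  have hle : ddist E u v ≤ 1 := Nat.sInf_le hwalk
  have hpos : ddist E u v ≠ 0 := fun h0 =>
    hne (hasWalkLen_zero_iff.mp (h0 ▸ Reaches.hasWalkLen_ddist ⟨1, hwalk⟩))
  omega

lemma ddist_ne_one_of_not_adj (hr : Reaches E u v) (h : ¬ E u v) : ddist E u v ≠ 1 :=
  fun h1 => h (hasWalkLen_one_iff.mp (h1 ▸ hr.hasWalkLen_ddist))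

lemma Resolves.symm (h : Resolves E w u v) : Resolves E w v u := by
  rcases h with h | h | ⟨hu, hv, hd⟩
  · exact Or.inr (Or.inl h)
  · exact Or.inl h
  · exact Or.inr (Or.inr ⟨hv, hu, hd.symm⟩)

lemma resolves_of_adj_of_not_adj (hr : Reaches E w u) (hadj : E w v) (hnadj : ¬ E w u) :
    Resolves E w u v := by
  by_cases hwv : w = v
  · exact Or.inr (Or.inl hwv)
  · refine Or.inr (Or.inr ⟨hr, ⟨1, hasWalkLen_one_iff.mpr hadj⟩, ?_⟩)
    rw [ddist_eq_one_of_adj hwv hadj]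
    exact ddist_ne_one_of_not_adj hr hnadj

lemma ResolvesSet.union {R₁ R₂ U₁ U₂ : Set V}
    (h₁ : ResolvesSet E R₁ U₁) (h₂ : ResolvesSet E R₂ U₂)
    (hcross : ∀ x ∈ U₁, ∀ y ∈ U₂, ∃ w ∈ R₁ ∪ R₂, Resolves E w x y) :
    ResolvesSet E (R₁ ∪ R₂) (U₁ ∪ U₂) := by
  rintro x (hx | hx) y (hy | hy) hxy
  · obtain ⟨w, hw, hres⟩ := h₁ x hx y hy hxy
    exact ⟨w, Or.inl hw, hres⟩
  · exact hcross x hx y hy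
  · obtain ⟨w, hw, hres⟩ := hcross y hy x hx
    exact ⟨w, hw, hres.symm⟩
  · obtain ⟨w, hw, hres⟩ := h₂ x hx y hy hxy
    exact ⟨w, Or.inr hw, hres⟩

lemma exists_resolves_of_not_oneVertex {R : Set V} (hr : ∀ w ∈ R, Reaches E w u)
    (hadj : ∀ w ∈ R, E w v) (hu : ¬ OneVertex E R u) : ∃ w ∈ R, Resolves E w u v := by
  by_cases huR : u ∈ R
  · exact ⟨u, huR, Or.inl rfl⟩
  · obtain ⟨w, hw, hnadj⟩ : ∃ w ∈ R, ¬ E w u := by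
      by_contra! h
      exact hu ⟨huR, h⟩
    exact ⟨w, hw, resolves_of_adj_of_not_adj (hr w hw) (hadj w hw) hnadj⟩

lemma exists_resolves_of_not_twoVertex {R : Set V} (hr : ∀ w ∈ R, Reaches E w u)
    (hnadj : ∀ w ∈ R, ¬ E w u) (hv : ¬ TwoVertex E R v) : ∃ w ∈ R, Resolves E w u v := by
  by_cases hvR : v ∈ R
  · exact ⟨v, hvR, Or.inr (Or.inl rfl)⟩
  · obtain ⟨w, hw, hadj⟩ : ∃ w ∈ R, E w v := by
      by_contra! h
      exact hv ⟨hvR, h⟩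
    exact ⟨w, hw, resolves_of_adj_of_not_adj (hr w hw) hadj (hnadj w hw)⟩

end

theorem stmt_7_general {V : Type u} {E : V → V → Prop}
    (hsc : SConn E Set.univ)
    {V₁ V₂ R₁ R₂ : Set V}
    (hforward : ∀ x ∈ V₁, ∀ y ∈ V₂, E x y)
    (hback : ∀ y ∈ V₂, ∀ x ∈ V₁, ¬ E y x)
    (hR₁ : R₁ ⊆ V₁) (hR₂ : R₂ ⊆ V₂)
    (hres₁ : ResolvesSet E R₁ V₁) (hres₂ : ResolvesSet E R₂ V₂)
    (hv : (¬ ∃ u ∈ V₁, OneVertex E R₁ u) ∨ (¬ ∃ u ∈ V₂, TwoVertex E R₂ u)) :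
    ResolvesSet E (R₁ ∪ R₂) (V₁ ∪ V₂) := by
  have hreach : ∀ x y : V, Reaches E x y := fun x y => hsc x trivial y trivial
  refine hres₁.union hres₂ fun x hx y hy => ?_
  rcases hv with hno₁ | hno₂
  · obtain ⟨w, hw, hres⟩ := exists_resolves_of_not_oneVertex (fun w _ => hreach w x)
      (fun w hw => hforward w (hR₁ hw) y hy) fun h => hno₁ ⟨x, hx, h⟩
    exact ⟨w, Or.inl hw, hres⟩
  · obtain ⟨w, hw, hres⟩ := exists_resolves_of_not_twoVertex (fun w _ => hreach w x)
      (fun w hw => hback w (hR₂ hw) x hx) fun h => hno₂ ⟨y, hy, h⟩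
    exact ⟨w, Or.inr hw, hres⟩

/-- Directed join case: if the left side has no 1-vertex or the right side has
no 2-vertex, the union of the two resolving sets resolves the union. -/
theorem stmt_7 {V : Type u} {E : V → V → Prop}
    (hsc : SConn E Set.univ)
    (hdiam : ∀ u v : V, u ≠ v → ddist E u v ≤ 2)
    {V₁ V₂ R₁ R₂ : Set V}
    (hdisj : Disjoint V₁ V₂) (hV₁ : V₁.Nonempty) (hV₂ : V₂.Nonempty)
    (hforward : ∀ x ∈ V₁, ∀ y ∈ V₂, E x y)
    (hback : ∀ y ∈ V₂, ∀ x ∈ V₁, ¬ E y x)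
    (hR₁ : R₁ ⊆ V₁) (hR₂ : R₂ ⊆ V₂)
    (hR₁ne : R₁.Nonempty) (hR₂ne : R₂.Nonempty)
    (hres₁ : ResolvesSet E R₁ V₁) (hres₂ : ResolvesSet E R₂ V₂)
    (hv : (¬ ∃ u ∈ V₁, OneVertex E R₁ u) ∨ (¬ ∃ u ∈ V₂, TwoVertex E R₂ u)) :
    ResolvesSet E (R₁ ∪ R₂) (V₁ ∪ V₂) :=
  stmt_7_general hsc hforward hback hR₁ hR₂ hres₁ hres₂ hv
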